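/- arXiv:math/0308167 — 7 statements merged into one kernel-verified Lean document; each statement's English description precedes it below -/
import Mathlib

section
/- Let Θ be a 2-form of rank ≥ 4 everywhere on a connected manifold M with dΘ = -η ∧ Θ for a closed 1-form η. If X is a vector field with L_X Θ = μ_X Θ for a smooth function μ_X, then the function l(X) = μ_X + η(X) is constant on M. -/
/-- An abstract model of the graded algebra of smooth differential forms on a smooth
manifold `M`, together with the exterior derivative `d`, the space of smooth vector
fields, the Lie bracket of vector fields and the interior product.  Multiplication in
the ℝ-algebra `A` is the wedge product, and `Λ k` is the subspace of the forms which
are homogeneous of degree `k`. -/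
structure FormCalculus where
  /-- The space of all (smooth, inhomogeneous) differential forms on the manifold. -/
  A : Type*
  [ringA : Ring A]
  [algebraA : Algebra ℝ A]
  /-- `Λ k` is the space of differential forms of degree `k`. -/
  Λ : ℕ → Submodule ℝ A
  /-- The exterior derivative. -/
  d : A →ₗ[ℝ] A
  /-- The space of smooth vector fields on the manifold. -/
  Vec : Type*
  [addCommGroupVec : AddCommGroup Vec]
  [moduleVec : Module ℝ Vec]
  /-- The Lie bracket of vector fields. -/
  bracket : Vec → Vec → Vec
  /-- The interior product `iprod X θ = i(X)θ`. -/
  iprod : Vec → A →ₗ[ℝ] A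
  /-- Constant functions are `0`-forms. -/
  algebraMap_mem : ∀ r : ℝ, algebraMap ℝ A r ∈ Λ 0
  /-- The wedge product of forms of degrees `i` and `j` has degree `i + j`. -/
  mul_mem : ∀ {i j : ℕ} {a b : A}, a ∈ Λ i → b ∈ Λ j → a * b ∈ Λ (i + j)
  /-- Graded commutativity of the wedge product. -/
  gcomm : ∀ {i j : ℕ} {a b : A}, a ∈ Λ i → b ∈ Λ j →
    a * b = ((-1 : ℝ) ^ (i * j)) • (b * a)
  /-- `0`-forms (smooth functions) commute with all forms. -/
  grade0_comm : ∀ {f : A}, f ∈ Λ 0 → ∀ a : A, f * a = a * f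
  /-- The exterior derivative raises degree by one. -/
  d_mem : ∀ {k : ℕ} {a : A}, a ∈ Λ k → d a ∈ Λ (k + 1)
  /-- `d ∘ d = 0`. -/
  d_d : ∀ a : A, d (d a) = 0
  /-- The graded Leibniz rule for the exterior derivative. -/
  leibniz : ∀ {i : ℕ} (a b : A), a ∈ Λ i →
    d (a * b) = d a * b + ((-1 : ℝ) ^ i) • (a * d b)
  /-- The interior product lowers degree by one. -/
  iprod_mem : ∀ {k : ℕ} (X : Vec) {a : A}, a ∈ Λ (k + 1) → iprod X a ∈ Λ k
  /-- The interior product vanishes on `0`-forms. -/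
  iprod_grade0 : ∀ (X : Vec) {f : A}, f ∈ Λ 0 → iprod X f = 0
  /-- The graded Leibniz rule for the interior product. -/
  iprod_leibniz : ∀ {i : ℕ} (X : Vec) (a b : A), a ∈ Λ i →
    iprod X (a * b) = iprod X a * b + ((-1 : ℝ) ^ i) • (a * iprod X b)
  /-- The interior product is additive in the vector field. -/
  iprod_add : ∀ X Y : Vec, iprod (X + Y) = iprod X + iprod Y
  /-- The interior product is ℝ-homogeneous in the vector field. -/
  iprod_smul : ∀ (r : ℝ) (X : Vec), iprod (r • X) = r • iprod X
  /-- `i([X,Y]) = L_X ∘ i(Y) - i(Y) ∘ L_X`, where `L_X = d ∘ i(X) + i(X) ∘ d` is the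
  Lie derivative. -/
  iprod_bracket : ∀ X Y : Vec, iprod (bracket X Y) =
    (d ∘ₗ iprod X + iprod X ∘ₗ d) ∘ₗ iprod Y - iprod Y ∘ₗ (d ∘ₗ iprod X + iprod X ∘ₗ d)

attribute [instance] FormCalculus.ringA FormCalculus.algebraA
  FormCalculus.addCommGroupVec FormCalculus.moduleVec

/-- The Lie derivative of differential forms in the direction of a vector field,
via Cartan's magic formula `L_X = d ∘ i(X) + i(X) ∘ d`. -/
def FormCalculus.L (C : FormCalculus) (X : C.Vec) : C.A →ₗ[ℝ] C.A :=
  C.d ∘ₗ C.iprod X + C.iprod X ∘ₗ C.d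

/-- Let `Θ` be a 2-form of rank ≥ 4 everywhere on a connected manifold `M`
with `dΘ = -η ∧ Θ` for a closed 1-form `η`.  If `X` is a vector field with
`L_X Θ = μ_X • Θ` for a smooth function `μ_X`, then the function `l(X) = μ_X + η(X)`
is constant on `M`. -/
theorem lee_value_constant (C : FormCalculus)
    -- `M` is connected: the only closed `0`-forms are the constant functions
    (hconn : ∀ f ∈ C.Λ 0, C.d f = 0 → ∃ c : ℝ, f = algebraMap ℝ C.A c)
    (Θ : C.A) (hΘ : Θ ∈ C.Λ 2)
    -- `Θ` has rank at least `4` at every point; in particular (Lemma 0) a 1-form whose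
    -- wedge product with `Θ` vanishes is identically zero:
    (hrank : ∀ α ∈ C.Λ 1, α * Θ = 0 → α = 0)
    (η : C.A) (hη : η ∈ C.Λ 1) (hηclosed : C.d η = 0)
    (hdΘ : C.d Θ = -(η * Θ))
    (X : C.Vec) (μ : C.A) (hμ : μ ∈ C.Λ 0) (hLX : C.L X Θ = μ * Θ) :
    ∃ c : ℝ, μ + C.iprod X η = algebraMap ℝ C.A c := by

  classical
  set f := C.iprod X η with hfdef
  have hf : f ∈ C.Λ 0 := C.iprod_mem X hη
  have hL : ∀ a : C.A, C.L X a = C.d (C.iprod X a) + C.iprod X (C.d a) := fun a => rfl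
  -- d commutes with L_X
  have comm : C.d (C.L X Θ) = C.L X (C.d Θ) := by
    simp [hL, map_add, C.d_d]
  -- left side
  have h1 : C.d (μ * Θ) = C.d μ * Θ + μ * C.d Θ := by
    have := C.leibniz μ Θ hμ
    simpa using this
  have lhs : C.d (C.L X Θ) = C.d μ * Θ - μ * (η * Θ) := by
    rw [hLX, h1, hdΘ, mul_neg, ← sub_eq_add_neg]
  -- right side
  have h2 : C.iprod X (η * Θ) = f * Θ - η * C.iprod X Θ := by
    have := C.iprod_leibniz X η Θ hη
    simpa [sub_eq_add_neg] using this
  have h3 : C.d (f * Θ) = C.d f * Θ + f * C.d Θ := by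
    have := C.leibniz f Θ hf
    simpa using this
  have h4 : C.d (η * C.iprod X Θ) = -(η * C.d (C.iprod X Θ)) := by
    have := C.leibniz η (C.iprod X Θ) hη
    simpa [hηclosed] using this
  have h5 : C.d (η * Θ) = -(η * C.d Θ) := by
    have := C.leibniz η Θ hη
    simpa [hηclosed] using this
  have h6 : C.iprod X (η * C.d Θ) = f * C.d Θ - η * C.iprod X (C.d Θ) := by
    have := C.iprod_leibniz X η (C.d Θ) hη
    simpa [sub_eq_add_neg] using this
  have hmuc : η * (μ * Θ) = μ * (η * Θ) := by
    rw [← mul_assoc, ← C.grade0_comm hμ η, mul_assoc]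
  have rhs : C.L X (C.d Θ) = -(C.d f * Θ) - μ * (η * Θ) := by
    rw [hdΘ, map_neg, hL, h2, map_sub, h3, h4, h5, map_neg, h6]
    have hcartan : C.d (C.iprod X Θ) + C.iprod X (C.d Θ) = μ * Θ := by
      rw [← hL, hLX]
    have expand : C.d f * Θ + f * C.d Θ - -(η * C.d (C.iprod X Θ)) +
        -(f * C.d Θ - η * C.iprod X (C.d Θ)) =
        C.d f * Θ + η * (C.d (C.iprod X Θ) + C.iprod X (C.d Θ)) := by
      rw [mul_add]; abel
    rw [expand, hcartan, hmuc]
    abel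
  -- combine
  have key : C.d (μ + f) * Θ = 0 := by
    have E := lhs.symm.trans (comm.trans rhs)
    have hE : C.d μ * Θ = -(C.d f * Θ) := sub_left_injective E
    rw [map_add, add_mul, hE, neg_add_cancel]
  have hsum : μ + f ∈ C.Λ 0 := (C.Λ 0).add_mem hμ hf
  have hd1 : C.d (μ + f) ∈ C.Λ 1 := by simpa using C.d_mem hsum
  have hd0 : C.d (μ + f) = 0 := hrank _ hd1 key
  exact hconn _ hsum hd0
end

section
/- If Ω is a locally conformal symplectic form with Lee form ω and Ω = d_ω θ for some 1-form θ, then the vector field X defined by i(X)Ω = θ satisfies L_X Ω = (1 - ω(X)) Ω; in particular X is an infinitesimal automorphism with l(X) = 1. -/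
/-- If `Ω` is a locally conformal symplectic form with Lee form `ω` and
`Ω = d_ω θ` for some 1-form `θ`, then the vector field `X` defined by `i(X)Ω = θ`
satisfies `L_X Ω = (1 - ω(X)) Ω`; in particular `X` is an infinitesimal automorphism
with `l(X) = μ_X + ω(X) = 1`. -/
theorem automorphism_of_exact (C : FormCalculus) (Ω ω θ : C.A)
    (hΩ : Ω ∈ C.Λ 2) (hω : ω ∈ C.Λ 1) (hωclosed : C.d ω = 0)
    (hLee : C.d Ω = -(ω * Ω))
    -- `Ω` is nondegenerate: contraction with `Ω` identifies vector fields and 1-forms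
    (hnd : ∀ τ ∈ C.Λ 1, ∃! Y : C.Vec, C.iprod Y Ω = τ)
    (hθ : θ ∈ C.Λ 1) (hexact : Ω = C.d θ + ω * θ)
    (X : C.Vec) (hX : C.iprod X Ω = θ) :
    C.L X Ω = (1 - C.iprod X ω) * Ω ∧
      ∃ μ ∈ C.Λ 0, C.L X Ω = μ * Ω ∧ μ + C.iprod X ω = 1 := by
  have hiprod : C.iprod X (ω * Ω) =
      C.iprod X ω * Ω + ((-1 : ℝ) ^ (1 : ℕ)) • (ω * C.iprod X Ω) :=
    C.iprod_leibniz X ω Ω hω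
  have hL : C.L X Ω = (1 - C.iprod X ω) * Ω := by
    have : C.L X Ω = C.d (C.iprod X Ω) + C.iprod X (C.d Ω) := rfl
    rw [this, hX, hLee, map_neg, hiprod, hX]
    simp only [pow_one, neg_smul, one_smul, neg_add_rev, neg_neg, sub_mul, one_mul]
    rw [hexact]
    abel
  refine ⟨hL, 1 - C.iprod X ω, ?_, hL, by abel⟩
  exact Submodule.sub_mem _ (by simpa using C.algebraMap_mem 1)
    (C.iprod_mem X (k := 0) hω)
end

section
/- A locally conformal symplectic form Ω with Lee form ω on a compact connected manifold is d_ω-exact if and only if there exists an infinitesimal automorphism X (i.e. L_X Ω = μ_X Ω for some function μ_X) with l(X) = μ_X + ω(X) ≠ 0. -/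
/-- A locally conformal symplectic form `Ω` with Lee form `ω` on a compact
connected manifold is `d_ω`-exact if and only if there exists an infinitesimal
automorphism `X` (i.e. `L_X Ω = μ_X • Ω` for some function `μ_X`) with
`l(X) = μ_X + ω(X) ≠ 0`. -/
theorem exact_iff_automorphism (C : FormCalculus)
    -- the (compact) manifold is nonempty
    (hnt : (0 : C.A) ≠ 1)
    -- `M` is connected: the only closed `0`-forms are the constant functions
    (hconn : ∀ f ∈ C.Λ 0, C.d f = 0 → ∃ c : ℝ, f = algebraMap ℝ C.A c)
    (Ω ω : C.A) (hΩ : Ω ∈ C.Λ 2) (hω : ω ∈ C.Λ 1) (hωclosed : C.d ω = 0)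
    (hLee : C.d Ω = -(ω * Ω))
    -- `Ω` is nondegenerate (so, as `dim M ≥ 4`, it has rank at least `4` everywhere):
    (hnd : ∀ τ ∈ C.Λ 1, ∃! Y : C.Vec, C.iprod Y Ω = τ)
    (hrank : ∀ α ∈ C.Λ 1, α * Ω = 0 → α = 0) :
    (∃ θ ∈ C.Λ 1, Ω = C.d θ + ω * θ) ↔
      (∃ X : C.Vec, ∃ μ ∈ C.Λ 0, C.L X Ω = μ * Ω ∧ μ + C.iprod X ω ≠ 0) := by
  constructor
  · rintro ⟨θ, hθ, hΩeq⟩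
    obtain ⟨X, hX, -⟩ := hnd θ hθ
    have hiω : C.iprod X ω ∈ C.Λ 0 := C.iprod_mem X hω
    have h1 : (1 : C.A) ∈ C.Λ 0 := by
      simpa using C.algebraMap_mem 1
    refine ⟨X, 1 - C.iprod X ω, Submodule.sub_mem _ h1 hiω, ?_, ?_⟩
    · have hL : C.L X Ω = C.d (C.iprod X Ω) + C.iprod X (C.d Ω) := rfl
      rw [hL, hX, hLee, map_neg, C.iprod_leibniz X ω Ω hω, hX]
      have : ((-1 : ℝ) ^ 1) • (ω * θ) = -(ω * θ) := by
        simp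
      rw [this, sub_mul, one_mul, hΩeq]
      abel
    · intro h
      apply hnt
      have : (1 : C.A) = 0 := by
        calc (1 : C.A) = 1 - C.iprod X ω + C.iprod X ω := by abel
        _ = 0 := h
      exact this.symm
  · rintro ⟨X, μ, hμ, hLX, hne⟩
    set σ : C.A := C.iprod X Ω with hσdef
    have hσ : σ ∈ C.Λ 1 := C.iprod_mem X hΩ
    set f : C.A := μ + C.iprod X ω with hfdef
    have hiω : C.iprod X ω ∈ C.Λ 0 := C.iprod_mem X hω
    have hf : f ∈ C.Λ 0 := Submodule.add_mem _ hμ hiω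
    -- Claim 1 : d σ + ω * σ = f * Ω
    have hL : C.L X Ω = C.d σ + C.iprod X (C.d Ω) := rfl
    have hiXdΩ : C.iprod X (C.d Ω) = -(C.iprod X ω * Ω) + ω * σ := by
      rw [hLee, map_neg, C.iprod_leibniz X ω Ω hω]
      have : ((-1 : ℝ) ^ 1) • (ω * C.iprod X Ω) = -(ω * σ) := by simp [hσdef]
      rw [this]
      abel
    have claim1 : C.d σ + ω * σ = f * Ω := by
      have := hLX
      rw [hL, hiXdΩ] at this
      rw [hfdef, add_mul]
      have : C.d σ + ω * σ = μ * Ω + C.iprod X ω * Ω := by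
        have h2 : C.d σ + (-(C.iprod X ω * Ω) + ω * σ) = μ * Ω := this
        calc C.d σ + ω * σ
            = C.d σ + (-(C.iprod X ω * Ω) + ω * σ) + C.iprod X ω * Ω := by abel
          _ = μ * Ω + C.iprod X ω * Ω := by rw [h2]
      exact this
    -- ω * ω = 0
    have hωω : ω * ω = 0 := by
      have := C.gcomm hω hω
      simp only [Nat.mul_one, pow_one, neg_one_smul] at this
      have h2 : ω * ω + ω * ω = 0 := by
        nth_rewrite 1 [this]; abel
      have h3 : (2 : ℝ) • (ω * ω) = 0 := by
        rw [two_smul]; exact h2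
      have := smul_eq_zero.mp h3
      rcases this with h | h
      · norm_num at h
      · exact h
    -- Claim 2 : d f * Ω = 0
    have hdfΩ : C.d f * Ω = 0 := by
      have wayA : C.d (f * Ω) = C.d f * Ω - f * (ω * Ω) := by
        rw [C.leibniz f Ω hf, pow_zero, one_smul, hLee, mul_neg]
        abel
      have wayB : C.d (f * Ω) = -(f * (ω * Ω)) := by
        have hdσ : C.d σ = f * Ω - ω * σ := by
          rw [← claim1]; abel
        calc C.d (f * Ω) = C.d (C.d σ + ω * σ) := by rw [claim1]
          _ = C.d (C.d σ) + C.d (ω * σ) := by rw [map_add]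
          _ = C.d (ω * σ) := by rw [C.d_d]; abel
          _ = C.d ω * σ + ((-1 : ℝ) ^ 1) • (ω * C.d σ) := C.leibniz ω σ hω
          _ = -(ω * C.d σ) := by rw [hωclosed]; simp
          _ = -(ω * (f * Ω - ω * σ)) := by rw [hdσ]
          _ = -(ω * (f * Ω)) + ω * (ω * σ) := by rw [mul_sub]; abel
          _ = -(ω * (f * Ω)) := by rw [← mul_assoc ω ω σ, hωω, zero_mul]; abel
          _ = -(f * (ω * Ω)) := by
              rw [← mul_assoc, ← C.grade0_comm hf ω, mul_assoc]
      have : C.d f * Ω - f * (ω * Ω) = -(f * (ω * Ω)) := by rw [← wayA, wayB]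
      calc C.d f * Ω = C.d f * Ω - f * (ω * Ω) + f * (ω * Ω) := by abel
        _ = -(f * (ω * Ω)) + f * (ω * Ω) := by rw [this]
        _ = 0 := by abel
    have hdf : C.d f = 0 := hrank _ (C.d_mem hf) hdfΩ
    obtain ⟨c, hc⟩ := hconn f hf hdf
    have hc0 : c ≠ 0 := by
      intro h
      apply hne
      rw [hc, h, map_zero]
    refine ⟨c⁻¹ • σ, Submodule.smul_mem _ _ hσ, ?_⟩
    have : C.d (c⁻¹ • σ) + ω * (c⁻¹ • σ) = c⁻¹ • (C.d σ + ω * σ) := by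
      rw [map_smul, smul_add, mul_smul_comm]
    rw [this, claim1, hc, ← Algebra.smul_def, smul_smul, inv_mul_cancel₀ hc0, one_smul]
end

section
/- Consider ℝ⁴ with coframe α, β, γ, η of 1-forms satisfying dα = -k α∧γ, dβ = k β∧γ, dγ = 0, dη = nλ α∧β (constants k, n, λ). Then with ω = -kγ, the 2-form Ω = nλ α∧β - k γ∧η satisfies Ω = d_ω η and d_ω Ω = 0. -/
/-- On a 4-manifold with coframe `α, β, γ, η` satisfying the structure
equations `dα = -k α∧γ`, `dβ = k β∧γ`, `dγ = 0`, `dη = nλ α∧β`, with `ω = -kγ`, the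
2-form `Ω = nλ α∧β - k γ∧η` satisfies `Ω = d_ω η` and `d_ω Ω = 0`. -/
theorem acfm_exact_lcs (C : FormCalculus)
    (k lam : ℝ) (n : ℤ) (hk : k ≠ 0) (hlam : lam ≠ 0) (hn : n ≠ 0)
    (α β γ η : C.A)
    (hα : α ∈ C.Λ 1) (hβ : β ∈ C.Λ 1) (hγ : γ ∈ C.Λ 1) (hη : η ∈ C.Λ 1)
    -- `α, β, γ, η` form a (pointwise) coframe:
    (hbasis : LinearIndependent ℝ ![α, β, γ, η])
    (hdα : C.d α = -(k • (α * γ))) (hdβ : C.d β = k • (β * γ))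
    (hdγ : C.d γ = 0) (hdη : C.d η = ((n : ℝ) * lam) • (α * β)) :
    (((n : ℝ) * lam) • (α * β) - k • (γ * η) = C.d η + -(k • γ) * η) ∧
      C.d (((n : ℝ) * lam) • (α * β) - k • (γ * η)) +
        -(k • γ) * (((n : ℝ) * lam) • (α * β) - k • (γ * η)) = 0 := by
  have gc : ∀ a b : C.A, a ∈ C.Λ 1 → b ∈ C.Λ 1 → a * b = -(b * a) := by
    intro a b ha hb
    have h := C.gcomm ha hb
    simpa using h
  have hγγ : γ * γ = 0 := by
    have h := gc γ γ hγ hγ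
    have h2 : (2 : ℝ) • (γ * γ) = 0 := by
      rw [two_smul]; nth_rewrite 1 [h]; exact neg_add_cancel _
    rcases smul_eq_zero.mp h2 with h0 | h0
    · norm_num at h0
    · exact h0
  have hγβ := gc γ β hγ hβ
  have hγα := gc γ α hγ hα
  have hdαβ : C.d (α * β) = 0 := by
    rw [C.leibniz α β hα, hdα, hdβ, pow_one, neg_one_smul, neg_mul, smul_mul_assoc,
      mul_smul_comm, mul_assoc, hγβ]
    simp [mul_assoc]
  have hdγη : C.d (γ * η) = -(((n : ℝ) * lam) • (γ * (α * β))) := by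
    rw [C.leibniz γ η hγ, hdγ, hdη, pow_one, neg_one_smul, zero_mul, zero_add,
      mul_smul_comm]
  constructor
  · rw [hdη, neg_mul, smul_mul_assoc, sub_eq_add_neg]
  · have hz : γ * (γ * η) = 0 := by rw [← mul_assoc, hγγ, zero_mul]
    simp only [map_sub, map_smul, hdαβ, hdγη, smul_zero, smul_neg, smul_smul,
      neg_mul, mul_sub, mul_smul_comm, hz, sub_zero, zero_sub, neg_neg, smul_mul_assoc]
    module
end

section
/- With coframe α, β, γ, η satisfying the structure equations (dα = -k α∧γ, dβ = k β∧γ, dγ = 0, dη = nλ α∧β) and ω = -kγ, the 2-form Ω_{(t₁,t₂,t₃)} = t₁(α∧η) + t₂(β∧γ) + t₃(nλ α∧β - k γ∧η) satisfies Ω_{(t₁,t₂,t₃)} = t₁(α∧η) + d_ω((t₂/(2k))β + t₃η), and hence d_ω Ω_{(t₁,t₂,t₃)} = 0. -/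
/-- With coframe `α, β, γ, η` satisfying the structure equations and
`ω = -kγ`, the 2-form `Ω = t₁(α∧η) + t₂(β∧γ) + t₃(nλ α∧β - k γ∧η)` satisfies
`Ω = t₁(α∧η) + d_ω((t₂/(2k))β + t₃η)`, and hence `d_ω Ω = 0`. -/
theorem acfm_family_dOmega_closed (C : FormCalculus)
    (k lam : ℝ) (n : ℤ) (hk : k ≠ 0) (hlam : lam ≠ 0) (hn : n ≠ 0)
    (α β γ η : C.A)
    (hα : α ∈ C.Λ 1) (hβ : β ∈ C.Λ 1) (hγ : γ ∈ C.Λ 1) (hη : η ∈ C.Λ 1)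
    -- `α, β, γ, η` form a (pointwise) coframe:
    (hbasis : LinearIndependent ℝ ![α, β, γ, η])
    (hdα : C.d α = -(k • (α * γ))) (hdβ : C.d β = k • (β * γ))
    (hdγ : C.d γ = 0) (hdη : C.d η = ((n : ℝ) * lam) • (α * β))
    (t₁ t₂ t₃ : ℝ) :
    (t₁ • (α * η) + t₂ • (β * γ) + t₃ • (((n : ℝ) * lam) • (α * β) - k • (γ * η)) =
        t₁ • (α * η) +
          (C.d ((t₂ / (2 * k)) • β + t₃ • η) +
            -(k • γ) * ((t₂ / (2 * k)) • β + t₃ • η))) ∧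
      C.d (t₁ • (α * η) + t₂ • (β * γ) + t₃ • (((n : ℝ) * lam) • (α * β) - k • (γ * η))) +
        -(k • γ) *
          (t₁ • (α * η) + t₂ • (β * γ) + t₃ • (((n : ℝ) * lam) • (α * β) - k • (γ * η))) = 0 := by
  
  classical
  -- anticommutativity of 1-forms
  have hac : ∀ a b : C.A, a ∈ C.Λ 1 → b ∈ C.Λ 1 → a * b = -(b * a) := by
    intro a b ha hb
    have h := C.gcomm ha hb
    simpa using h
  -- squares of 1-forms vanish
  have hsq : ∀ a : C.A, a ∈ C.Λ 1 → a * a = 0 := by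
    intro a ha
    have h := hac a a ha ha
    have h2 : (2 : ℝ) • (a * a) = 0 := by
      rw [two_smul]
      nth_rw 2 [h]
      simp
    have := smul_eq_zero.mp h2
    rcases this with h' | h'
    · norm_num at h'
    · exact h'
  have hγβ : γ * β = -(β * γ) := hac γ β hγ hβ
  have hγα : γ * α = -(α * γ) := hac γ α hγ hα
  have hγγ : γ * γ = 0 := hsq γ hγ
  have hαα : α * α = 0 := hsq α hα
  -- reductions of triple products (right-associated canonical forms)
  have hααβ : α * (α * β) = 0 := by rw [← mul_assoc, hαα, zero_mul]
  have hβγγ : (β * γ) * γ = 0 := by rw [mul_assoc, hγγ, mul_zero]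
  have hαγβ : (α * γ) * β = -(α * (β * γ)) := by rw [mul_assoc, hγβ, mul_neg]
  have hgαη : γ * (α * η) = -(α * (γ * η)) := by
    rw [← mul_assoc, hγα, neg_mul, mul_assoc]
  have hgβγ : γ * (β * γ) = 0 := by
    rw [← mul_assoc, hγβ, neg_mul, mul_assoc, hγγ, mul_zero, neg_zero]
  have hgγη : γ * (γ * η) = 0 := by rw [← mul_assoc, hγγ, zero_mul]
  -- exterior derivatives of the basic 2-forms
  have hdαη : C.d (α * η) = (-k) • (α * (γ * η)) := by
    rw [C.leibniz α η hα, hdα, hdη]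
    simp only [pow_one, neg_smul, one_smul, neg_mul, smul_mul_assoc, mul_smul_comm,
      mul_assoc, hααβ, smul_zero, add_zero, neg_zero]
  have hdβγ : C.d (β * γ) = 0 := by
    rw [C.leibniz β γ hβ, hdβ, hdγ]
    simp only [pow_one, neg_smul, one_smul, smul_mul_assoc, hβγγ, smul_zero, mul_zero,
      add_zero, neg_zero, zero_add]
  have hdαβ : C.d (α * β) = 0 := by
    rw [C.leibniz α β hα, hdα, hdβ]
    simp only [pow_one, neg_smul, one_smul, neg_mul, smul_mul_assoc, mul_smul_comm,
      hαγβ, smul_neg]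
    module
  have hdγη : C.d (γ * η) = (-((n : ℝ) * lam)) • (γ * (α * β)) := by
    rw [C.leibniz γ η hγ, hdγ, hdη]
    simp only [pow_one, neg_smul, one_smul, zero_mul, mul_smul_comm, zero_add]
  constructor
  · -- part 1
    have hdθ : C.d ((t₂ / (2 * k)) • β + t₃ • η)
        = (t₂ / (2 * k) * k) • (β * γ) + (t₃ * ((n : ℝ) * lam)) • (α * β) := by
      rw [map_add, map_smul, map_smul, hdβ, hdη, smul_smul, smul_smul]
    have hωθ : -(k • γ) * ((t₂ / (2 * k)) • β + t₃ • η)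
        = (k * (t₂ / (2 * k))) • (β * γ) - (k * t₃) • (γ * η) := by
      simp only [neg_mul, smul_mul_assoc, mul_add, mul_smul_comm, hγβ]
      module
    rw [hdθ, hωθ]
    match_scalars <;> field_simp <;> ring
  · -- part 2
    rw [map_add, map_add, map_smul, map_smul, map_smul, map_sub, map_smul, map_smul,
      hdαη, hdβγ, hdαβ, hdγη]
    simp only [neg_mul, smul_mul_assoc, mul_add, mul_sub, mul_smul_comm,
      hgαη, hgβγ, hgγη]
    module
end

section
/- If ω is a closed 1-form and X a vector field on a compact oriented 2m-dimensional manifold with a nondegenerate 2-form Ω satisfying dΩ = -ω∧Ω and L_X Ω = -ω(X) Ω, then ∫_M ω(X) Ω^m = 0. -/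
namespace FormCalculus

variable (C : FormCalculus)

def lichnerowicz (ω : C.A) : C.A →ₗ[ℝ] C.A :=
  C.d + LinearMap.mulLeft ℝ ω

theorem lichnerowicz_apply (ω a : C.A) : C.lichnerowicz ω a = C.d a + ω * a := rfl

theorem one_mem_zero : (1 : C.A) ∈ C.Λ 0 := by
  simpa using C.algebraMap_mem 1

theorem d_one : C.d 1 = 0 := by
  have h := C.leibniz (1 : C.A) 1 C.one_mem_zero
  rw [one_mul, pow_zero, one_smul, one_mul] at h
  simpa using h

theorem pow_mem {k : ℕ} {a : C.A} (ha : a ∈ C.Λ k) (n : ℕ) : a ^ n ∈ C.Λ (k * n) := by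
  induction n with
  | zero => simpa using C.one_mem_zero
  | succ n ih => simpa [pow_succ, Nat.mul_succ] using C.mul_mem ih ha

theorem mul_comm_of_mem_two {j : ℕ} {a b : C.A} (ha : a ∈ C.Λ 2) (hb : b ∈ C.Λ j) :
    a * b = b * a := by
  simpa [pow_mul] using C.gcomm ha hb

theorem mul_anticomm_of_mem_one {i : ℕ} {a b : C.A} (ha : a ∈ C.Λ i) (hb : b ∈ C.Λ 1) :
    a * b = (-1 : ℝ) ^ i • (b * a) := by
  simpa using C.gcomm ha hb

theorem lichnerowicz_mul {i : ℕ} {β a : C.A} (α : C.A) (hβ : β ∈ C.Λ 1) (ha : a ∈ C.Λ i)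
    (b : C.A) :
    C.lichnerowicz (α + β) (a * b) =
      C.lichnerowicz α a * b + (-1 : ℝ) ^ i • (a * C.lichnerowicz β b) := by
  have hsign : ((-1 : ℝ) ^ i) * (-1) ^ i = 1 := by rw [← mul_pow]; simp
  simp only [lichnerowicz_apply, C.leibniz a b ha, mul_add, add_mul, smul_add, ← mul_assoc,
    C.mul_anticomm_of_mem_one ha hβ, smul_mul_assoc, smul_smul, hsign, one_smul]
  abel

theorem lichnerowicz_nsmul_pow_eq_zero {i : ℕ} {ω Ω : C.A} (hω : ω ∈ C.Λ 1) (hΩ : Ω ∈ C.Λ i)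
    (hΩclosed : C.lichnerowicz ω Ω = 0) (n : ℕ) : C.lichnerowicz (n • ω) (Ω ^ n) = 0 := by
  induction n with
  | zero => simp [lichnerowicz_apply, C.d_one]
  | succ n ih =>
    rw [pow_succ', succ_nsmul', C.lichnerowicz_mul ω (nsmul_mem hω n) hΩ, hΩclosed, ih]
    simp

theorem iprod_pow_succ {Ω : C.A} (hΩ : Ω ∈ C.Λ 2) (X : C.Vec) (n : ℕ) :
    C.iprod X (Ω ^ (n + 1)) = (n + 1) • (C.iprod X Ω * Ω ^ n) := by
  induction n with
  | zero => simp
  | succ n ih =>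
    rw [pow_succ', C.iprod_leibniz X Ω _ hΩ, ih, mul_smul_comm, ← mul_assoc,
      C.mul_comm_of_mem_two hΩ (C.iprod_mem X hΩ), mul_assoc, ← pow_succ']
    simp only [even_two, Even.neg_one_pow, one_smul]
    rw [succ_nsmul' _ (n + 1)]

theorem lichnerowicz_iprod_add_iprod_lichnerowicz {ω : C.A} (hω : ω ∈ C.Λ 1) (X : C.Vec)
    (a : C.A) :
    C.lichnerowicz ω (C.iprod X a) + C.iprod X (C.lichnerowicz ω a) =
      C.L X a + C.iprod X ω * a := by
  simp only [lichnerowicz_apply, map_add, C.iprod_leibniz X ω a hω, L, LinearMap.add_apply,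
    LinearMap.comp_apply, pow_one, neg_one_smul]
  abel

theorem iprod_mul_eq_of_mul_eq_zero {ω a : C.A} (hω : ω ∈ C.Λ 1) (h : ω * a = 0) (X : C.Vec) :
    C.iprod X ω * a = ω * C.iprod X a := by
  have := C.iprod_leibniz X ω a hω
  rw [h, map_zero, pow_one, neg_one_smul, eq_comm, add_neg_eq_zero] at this
  exact this

end FormCalculus

theorem integral_vanishes_general (C : FormCalculus) (m : ℕ) (hm : 2 ≤ m)
    (ω Ω : C.A) (hω : ω ∈ C.Λ 1) (hΩ : Ω ∈ C.Λ 2)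
    (hdΩ : C.d Ω = -(ω * Ω))
    (X : C.Vec) (hLX : C.L X Ω = -(C.iprod X ω * Ω))
    -- the manifold has dimension `2m`, so there are no nonzero forms of higher degree:
    (htop : ∀ a ∈ C.Λ (2 * m + 1), a = 0)
    -- integration of forms over the compact oriented manifold `M`; by Stokes' theorem
    -- the integral of an exact form vanishes:
    (integral : C.A →ₗ[ℝ] ℝ) (hStokes : ∀ a : C.A, integral (C.d a) = 0) :
    integral (C.iprod X ω * Ω ^ m) = 0 := by
  obtain ⟨n, rfl⟩ : ∃ n, m = n + 1 := ⟨m - 1, by omega⟩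
  set θ := C.iprod X Ω
  have hΩclosed : C.lichnerowicz ω Ω = 0 := by
    rw [C.lichnerowicz_apply, hdΩ, neg_add_cancel]
  have hθclosed : C.lichnerowicz ω θ = 0 := by
    have h := C.lichnerowicz_iprod_add_iprod_lichnerowicz hω X Ω
    rwa [hΩclosed, map_zero, add_zero, hLX, neg_add_cancel] at h
  have hθΩclosed : C.lichnerowicz ((n + 1) • ω) (θ * Ω ^ n) = 0 := by
    rw [succ_nsmul', C.lichnerowicz_mul ω (nsmul_mem hω n) (C.iprod_mem X hΩ), hθclosed,
      C.lichnerowicz_nsmul_pow_eq_zero hω hΩ hΩclosed n, zero_mul, mul_zero, smul_zero, add_zero]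
  have hωΩtop : ω * Ω ^ (n + 1) = 0 :=
    htop _ (by simpa [add_comm] using C.mul_mem hω (C.pow_mem hΩ (n + 1)))
  have hexact : C.iprod X ω * Ω ^ (n + 1) = -C.d (θ * Ω ^ n) := by
    rw [C.iprod_mul_eq_of_mul_eq_zero hω hωΩtop, C.iprod_pow_succ hΩ, mul_smul_comm,
      ← smul_mul_assoc, eq_neg_iff_add_eq_zero, add_comm, ← C.lichnerowicz_apply, hθΩclosed]
  rw [hexact, map_neg, hStokes, neg_zero]

/-- If `ω` is a closed 1-form and `X` a vector field on a compact
oriented `2m`-dimensional manifold with a nondegenerate 2-form `Ω` satisfying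
`dΩ = -ω ∧ Ω` and `L_X Ω = -ω(X) Ω`, then `∫_M ω(X) Ω^m = 0`. -/
theorem integral_vanishes (C : FormCalculus) (m : ℕ) (hm : 2 ≤ m)
    (ω Ω : C.A) (hω : ω ∈ C.Λ 1) (hωclosed : C.d ω = 0) (hΩ : Ω ∈ C.Λ 2)
    -- `Ω` is nondegenerate:
    (hnd : ∀ τ ∈ C.Λ 1, ∃! Y : C.Vec, C.iprod Y Ω = τ)
    (hdΩ : C.d Ω = -(ω * Ω))
    (X : C.Vec) (hLX : C.L X Ω = -(C.iprod X ω * Ω))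
    -- the manifold has dimension `2m`, so there are no nonzero forms of higher degree:
    (htop : ∀ a ∈ C.Λ (2 * m + 1), a = 0)
    -- integration of forms over the compact oriented manifold `M`; by Stokes' theorem
    -- the integral of an exact form vanishes:
    (integral : C.A →ₗ[ℝ] ℝ) (hStokes : ∀ a : C.A, integral (C.d a) = 0) :
    integral (C.iprod X ω * Ω ^ m) = 0 :=
  integral_vanishes_general C m hm ω Ω hω hΩ hdΩ X hLX htop integral hStokes
end

section
/- Let Θ be a 2-form of rank ≥ 4 everywhere on a connected manifold with dΘ = -η∧Θ (η closed). The map l sending an infinitesimal automorphism X (with L_X Θ = μ_X Θ) to the constant l(X) = μ_X + η(X) is a Lie algebra homomorphism to ℝ: l([X,Y]) = 0 and l is linear. -/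
/-- Let `Θ` be a 2-form of rank ≥ 4 everywhere on a connected manifold
with `dΘ = -η ∧ Θ` (`η` closed).  The map `l` sending an infinitesimal automorphism `X`
(with `L_X Θ = μ_X • Θ`) to the constant `l(X) = μ_X + η(X)` is a Lie algebra
homomorphism to `ℝ`: `l([X,Y]) = 0` and `l` is linear. -/
theorem lee_homomorphism (C : FormCalculus)
    -- the manifold is nonempty
    (hnt : (0 : C.A) ≠ 1)
    -- `M` is connected: the only closed `0`-forms are the constant functions
    (hconn : ∀ f ∈ C.Λ 0, C.d f = 0 → ∃ c : ℝ, f = algebraMap ℝ C.A c)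
    (Θ : C.A) (hΘ : Θ ∈ C.Λ 2)
    -- `Θ` has rank at least `4` at every point (Lemma 0 and its degree-zero analogue):
    (hrank1 : ∀ α ∈ C.Λ 1, α * Θ = 0 → α = 0)
    (hrank0 : ∀ f ∈ C.Λ 0, f * Θ = 0 → f = 0)
    (η : C.A) (hη : η ∈ C.Λ 1) (hηclosed : C.d η = 0)
    (hdΘ : C.d Θ = -(η * Θ))
    (X Y : C.Vec) (μX μY μB : C.A)
    (hμX : μX ∈ C.Λ 0) (hμY : μY ∈ C.Λ 0) (hμB : μB ∈ C.Λ 0)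
    (hX : C.L X Θ = μX * Θ) (hY : C.L Y Θ = μY * Θ)
    (hB : C.L (C.bracket X Y) Θ = μB * Θ)
    (cX cY cB : ℝ)
    (hcX : μX + C.iprod X η = algebraMap ℝ C.A cX)
    (hcY : μY + C.iprod Y η = algebraMap ℝ C.A cY)
    (hcB : μB + C.iprod (C.bracket X Y) η = algebraMap ℝ C.A cB) :
    cB = 0 ∧
      ∀ (a b : ℝ) (μZ : C.A), μZ ∈ C.Λ 0 →
        C.L (a • X + b • Y) Θ = μZ * Θ →
        ∀ cZ : ℝ, μZ + C.iprod (a • X + b • Y) η = algebraMap ℝ C.A cZ →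
          cZ = a * cX + b * cY := by

  classical
  have ntA : Nontrivial C.A := ⟨0, 1, hnt⟩
  have hinj : Function.Injective (algebraMap ℝ C.A) := RingHom.injective _
  have h1mem : (1 : C.A) ∈ C.Λ 0 := by simpa using C.algebraMap_mem 1
  have d_one : C.d 1 = 0 := by
    have h := C.leibniz (i := 0) 1 1 h1mem
    simp at h
    exact h
  have d_const : ∀ r : ℝ, C.d (algebraMap ℝ C.A r) = 0 := by
    intro r
    rw [Algebra.algebraMap_eq_smul_one, map_smul, d_one, smul_zero]
  have dηX : C.d (C.iprod X η) = - C.d μX := by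
    have h := congrArg C.d hcX
    rw [map_add, d_const] at h
    exact eq_neg_of_add_eq_zero_right h
  have dηY : C.d (C.iprod Y η) = - C.d μY := by
    have h := congrArg C.d hcY
    rw [map_add, d_const] at h
    exact eq_neg_of_add_eq_zero_right h
  -- the Lie derivative commutator identity
  have Lcomm : C.L (C.bracket X Y) Θ = C.L X (C.L Y Θ) - C.L Y (C.L X Θ) := by
    simp only [FormCalculus.L, C.iprod_bracket X Y, LinearMap.add_apply,
      LinearMap.comp_apply, LinearMap.sub_apply, map_add, map_sub, C.d_d,
      map_zero, zero_add, add_zero, sub_zero, zero_sub]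
    abel
  -- the product rule for the Lie derivative with a 0-form
  have Lmul : ∀ (Z : C.Vec) (f : C.A), f ∈ C.Λ 0 → ∀ a : C.A,
      C.L Z (f * a) = f * C.L Z a + C.iprod Z (C.d f) * a := by
    intro Z f hf a
    have h1 : C.iprod Z (f * a) = f * C.iprod Z a := by
      rw [C.iprod_leibniz (i := 0) Z f a hf, C.iprod_grade0 Z hf]
      simp
    have h2 : C.d (f * a) = C.d f * a + f * C.d a := by
      rw [C.leibniz (i := 0) f a hf]; simp
    have h3 : C.iprod Z (C.d f * a)
        = C.iprod Z (C.d f) * a - C.d f * C.iprod Z a := by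
      rw [C.iprod_leibniz (i := 1) Z (C.d f) a (C.d_mem hf)]
      simp [sub_eq_add_neg]
    have h4 : C.iprod Z (f * C.d a) = f * C.iprod Z (C.d a) := by
      rw [C.iprod_leibniz (i := 0) Z f (C.d a) hf, C.iprod_grade0 Z hf]
      simp
    have h5 : C.d (f * C.iprod Z a)
        = C.d f * C.iprod Z a + f * C.d (C.iprod Z a) := by
      rw [C.leibniz (i := 0) f (C.iprod Z a) hf]; simp
    simp only [FormCalculus.L, LinearMap.add_apply, LinearMap.comp_apply]
    rw [h1, h2, map_add, h3, h4, h5, mul_add]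
    abel
  -- compute μB
  have hiXY : C.iprod X (C.d μY) ∈ C.Λ 0 := C.iprod_mem (k := 0) X (C.d_mem hμY)
  have hiYX : C.iprod Y (C.d μX) ∈ C.Λ 0 := C.iprod_mem (k := 0) Y (C.d_mem hμX)
  have hμB_eq : μB = C.iprod X (C.d μY) - C.iprod Y (C.d μX) := by
    have h := Lcomm
    rw [hB, hY, hX, Lmul X μY hμY Θ, Lmul Y μX hμX Θ, hX, hY] at h
    have hz : (μB - (C.iprod X (C.d μY) - C.iprod Y (C.d μX))) * Θ = 0 := by
      rw [sub_mul, sub_mul, h, ← mul_assoc, ← mul_assoc,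
        C.grade0_comm hμY μX]
      abel
    have hmem : μB - (C.iprod X (C.d μY) - C.iprod Y (C.d μX)) ∈ C.Λ 0 :=
      Submodule.sub_mem _ hμB (Submodule.sub_mem _ hiXY hiYX)
    have := hrank0 _ hmem hz
    exact sub_eq_zero.mp this
  -- compute i([X,Y]) η
  have hBη : C.iprod (C.bracket X Y) η
      = C.iprod Y (C.d μX) - C.iprod X (C.d μY) := by
    have hiYη : C.iprod Y η ∈ C.Λ 0 := C.iprod_mem (k := 0) Y hη
    rw [C.iprod_bracket]
    simp only [LinearMap.sub_apply, LinearMap.add_apply, LinearMap.comp_apply,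
      hηclosed, map_zero, add_zero, C.iprod_grade0 X hiYη, zero_add]
    rw [dηX, dηY]
    simp
    abel
  constructor
  · -- cB = 0
    apply hinj
    rw [map_zero, ← hcB, hμB_eq, hBη]
    abel
  · intro a b μZ hμZ hZ cZ hcZ
    have hX' : C.d (C.iprod X Θ) + C.iprod X (C.d Θ) = μX * Θ := by
      simpa [FormCalculus.L] using hX
    have hY' : C.d (C.iprod Y Θ) + C.iprod Y (C.d Θ) = μY * Θ := by
      simpa [FormCalculus.L] using hY
    have hLZ : C.L (a • X + b • Y) Θ = (a • μX + b • μY) * Θ := by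
      simp only [FormCalculus.L, C.iprod_add, C.iprod_smul, LinearMap.add_apply,
        LinearMap.comp_apply, LinearMap.smul_apply, map_add, map_smul]
      rw [add_mul, smul_mul_assoc, smul_mul_assoc, ← hX', ← hY']
      simp only [smul_add]
      abel
    have hz : (μZ - (a • μX + b • μY)) * Θ = 0 := by
      rw [sub_mul, ← hZ, hLZ, sub_self]
    have hmem : μZ - (a • μX + b • μY) ∈ C.Λ 0 :=
      Submodule.sub_mem _ hμZ
        (Submodule.add_mem _ (Submodule.smul_mem _ a hμX)
          (Submodule.smul_mem _ b hμY))
    have hμZ_eq : μZ = a • μX + b • μY := sub_eq_zero.mp (hrank0 _ hmem hz)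
    have hiZη : C.iprod (a • X + b • Y) η = a • C.iprod X η + b • C.iprod Y η := by
      simp [C.iprod_add, C.iprod_smul]
    apply hinj
    rw [← hcZ, hμZ_eq, hiZη, map_add, Algebra.algebraMap_eq_smul_one,
      Algebra.algebraMap_eq_smul_one, mul_smul, mul_smul,
      ← Algebra.algebraMap_eq_smul_one, ← Algebra.algebraMap_eq_smul_one,
      ← hcX, ← hcY]
    simp only [smul_add]
    abel
end
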